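/- For every finite subset I ⊆ C and every s ∈ {1,…,n}, the card(I)! rational functions E_{vI;s}(t_I; z_s), vI ∈ Seq(I), are linearly independent over ℂ in the field ℂ(t). -/

import Mathlib

/- STATEMENT 8.
Fix a finite index set `C`, `n ≥ 1` distinct complex numbers `z 1,…,z n`, and a finite subset
`I ⊆ C` (realized as the set of entries of a nodup list `vL`; `Seq(I)` is the set of
permutations of `vL`, of cardinality `card(I)!`).  The theorem: for every `s`, the family of
rational functions `E_{vI;s}(t_I;z_s)`, `vI ∈ Seq(I)`, is linearly independent over ℂ in
`ℂ(t)`. -/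

noncomputable section

abbrev FF (C : Type) := FractionRing (MvPolynomial C ℂ)

def tv {C : Type} (i : C) : FF C := algebraMap (MvPolynomial C ℂ) (FF C) (MvPolynomial.X i)

def cc {C : Type} (w : ℂ) : FF C := algebraMap (MvPolynomial C ℂ) (FF C) (MvPolynomial.C w)

/-- Auxiliary product: `Eaux w [i₁,…,i_N] = 1/(t_{i₁} − w) · ∏_{j=2}^N 1/(t_{i_j} − t_{i_{j−1}})`. -/
def Eaux {C : Type} (w : FF C) : List C → FF C
  | [] => 1
  | i :: tl => (tv i - w)⁻¹ * Eaux (tv i) tl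

/-- `E_{vI;s}(t_I; z_s)`. -/
def Efun {C : Type} (z : ℂ) (l : List C) : FF C := Eaux (cc z) l


/-!
Suppose `∑ c_l E_l = 0`, the sum running over the orderings `l` of `I`, and let `a` be the
first entry of some `l`. Multiply by `t_a - z` and specialize `t_a := z`. Every `E_l` with `l`
not starting with `a` is regular along `t_a = z`, so its term dies; for `l = a :: l'`, the
product `(t_a - z) E_l` is `E_{l'}` with base point `t_a`, which specializes to `E_{l'}` with
base point `z`. Hence `∑ c_{a :: l'} E_{l'} = 0` over the orderings `l'` of `I \ {a}`, and
induction on `card I` gives `c_{a :: l'} = 0`.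
-/

section HasValue

variable {R K L : Type*} [CommRing R] [Field K] [Algebra R K] [Field L]

/-- `x` is regular along `φ` (it has a denominator not killed by `φ`), with value `y`. -/
def HasValue (φ : R →+* L) (x : K) (y : L) : Prop :=
  ∃ p q : R, φ q ≠ 0 ∧ x = algebraMap R K p / algebraMap R K q ∧ y = φ p / φ q

variable {φ : R →+* L} {x x' : K} {y y' : L}

lemma hasValue_algebraMap (p : R) : HasValue φ (algebraMap R K p) (φ p) :=
  ⟨p, 1, by simp, by simp, by simp⟩

lemma hasValue_zero : HasValue φ (0 : K) 0 := by
  simpa using hasValue_algebraMap (K := K) (φ := φ) 0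

lemma hasValue_inv_algebraMap {q : R} (hq : φ q ≠ 0) :
    HasValue φ (algebraMap R K q)⁻¹ (φ q)⁻¹ :=
  ⟨1, q, hq, by simp, by simp⟩

lemma HasValue.mul (h : HasValue φ x y) (h' : HasValue φ x' y') :
    HasValue φ (x * x') (y * y') := by
  obtain ⟨p, q, hq, rfl, rfl⟩ := h
  obtain ⟨p', q', hq', rfl, rfl⟩ := h'
  exact ⟨p * p', q * q', by simpa using ⟨hq, hq'⟩, by rw [div_mul_div_comm]; simp,
    by rw [div_mul_div_comm]; simp⟩

lemma HasValue.smul {k : Type*} [CommRing k] [Algebra k R] [Algebra k K] [Algebra k L]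
    [IsScalarTower k R K] (hφ : φ.comp (algebraMap k R) = algebraMap k L)
    (h : HasValue φ x y) (c : k) : HasValue φ (c • x) (c • y) := by
  rw [Algebra.smul_def, Algebra.smul_def, IsScalarTower.algebraMap_apply k R K, ← hφ]
  exact (hasValue_algebraMap _).mul h

variable [IsFractionRing R K]

lemma algebraMap_ne_zero_of_map_ne_zero {q : R} (hq : φ q ≠ 0) : algebraMap R K q ≠ 0 := by
  rw [Ne, ← map_zero (algebraMap R K), (IsFractionRing.injective R K).eq_iff]
  rintro rfl
  exact hq (map_zero φ)

lemma HasValue.unique (h : HasValue φ x y) (h' : HasValue φ x y') : y = y' := by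
  obtain ⟨p, q, hq, rfl, rfl⟩ := h
  obtain ⟨p', q', hq', hx, rfl⟩ := h'
  rw [div_eq_div_iff (algebraMap_ne_zero_of_map_ne_zero hq)
    (algebraMap_ne_zero_of_map_ne_zero hq'), ← map_mul, ← map_mul,
    (IsFractionRing.injective R K).eq_iff] at hx
  rw [div_eq_div_iff hq hq', ← map_mul, ← map_mul, hx]

lemma HasValue.add (h : HasValue φ x y) (h' : HasValue φ x' y') :
    HasValue φ (x + x') (y + y') := by
  obtain ⟨p, q, hq, rfl, rfl⟩ := h
  obtain ⟨p', q', hq', rfl, rfl⟩ := h'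
  refine ⟨p * q' + q * p', q * q', by simpa using ⟨hq, hq'⟩, ?_, ?_⟩
  · rw [div_add_div _ _ (algebraMap_ne_zero_of_map_ne_zero hq)
      (algebraMap_ne_zero_of_map_ne_zero hq')]
    simp
  · rw [div_add_div _ _ hq hq']
    simp

lemma HasValue.sum {ι : Type*} {s : Finset ι} {f : ι → K} {g : ι → L}
    (h : ∀ i ∈ s, HasValue φ (f i) (g i)) : HasValue φ (∑ i ∈ s, f i) (∑ i ∈ s, g i) := by
  classical
  induction s using Finset.induction_on with
  | empty => simpa using hasValue_zero
  | insert i s hi ih =>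
    rw [Finset.sum_insert hi, Finset.sum_insert hi]
    exact (h i (s.mem_insert_self i)).add (ih fun j hj => h j (Finset.mem_insert_of_mem hj))

end HasValue

section Efun

open MvPolynomial

variable {σ : Type}

lemma tv_injective : Function.Injective (tv : σ → FF σ) :=
  (IsFractionRing.injective (MvPolynomial σ ℂ) (FF σ)).comp (X_injective (R := ℂ))

lemma tv_ne_cc (i : σ) (w : ℂ) : (tv i : FF σ) ≠ cc w := by
  classical
  refine (IsFractionRing.injective (MvPolynomial σ ℂ) (FF σ)).ne fun h => ?_
  have := congrArg (coeff (Finsupp.single i 1)) h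
  rw [coeff_X, coeff_C, if_pos rfl, if_neg (Finsupp.single_ne_zero.mpr one_ne_zero).symm] at this
  exact one_ne_zero this

lemma tv_sub_algebraMap (i : σ) (w : MvPolynomial σ ℂ) :
    tv i - algebraMap _ (FF σ) w = algebraMap _ (FF σ) (X i - w) := by
  rw [map_sub]; rfl

variable {φ : MvPolynomial σ ℂ →+* FF σ}

lemma exists_hasValue_Eaux (hφ : Function.Injective fun i => φ (X i)) :
    ∀ {l : List σ} {w : MvPolynomial σ ℂ}, l.Nodup → (∀ i ∈ l.head?, φ (X i) ≠ φ w) →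
      ∃ y, HasValue φ (Eaux (algebraMap _ (FF σ) w) l) y
  | [], _, _, _ => ⟨1, by simpa [Eaux] using hasValue_algebraMap (K := FF σ) (φ := φ) 1⟩
  | i :: tl, w, hl, hw => by
    have hi : φ (X i - w) ≠ 0 := by simpa [sub_eq_zero] using hw i rfl
    obtain ⟨y, hy⟩ := exists_hasValue_Eaux hφ (w := X i) hl.of_cons fun j hj =>
      hφ.ne fun h => (List.nodup_cons.mp hl).1 (h ▸ List.mem_of_mem_head? hj)
    exact ⟨_, by rw [Eaux, tv_sub_algebraMap]; exact (hasValue_inv_algebraMap hi).mul hy⟩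

lemma hasValue_Eaux :
    ∀ {l : List σ} {w : MvPolynomial σ ℂ}, l.Nodup → (∀ i ∈ l, φ (X i) = tv i) →
      (∀ i ∈ l, tv i ≠ φ w) → HasValue φ (Eaux (algebraMap _ (FF σ) w) l) (Eaux (φ w) l)
  | [], _, _, _, _ => by simpa [Eaux] using hasValue_algebraMap (K := FF σ) (φ := φ) 1
  | i :: tl, w, hl, hX, hw => by
    have hXi := hX i List.mem_cons_self
    have hi : φ (X i - w) ≠ 0 := by
      rw [map_sub, sub_ne_zero, hXi]
      exact hw i List.mem_cons_self
    have hne : ∀ j ∈ tl, tv j ≠ φ (X i) := fun j hj =>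
      hXi ▸ tv_injective.ne fun h => (List.nodup_cons.mp hl).1 (h ▸ hj)
    have htl := hasValue_Eaux hl.of_cons (fun j hj => hX j (List.mem_cons_of_mem i hj)) hne
    have hinv := hasValue_inv_algebraMap (K := FF σ) hi
    rw [map_sub φ, hXi] at hinv
    rw [hXi] at htl
    rw [Eaux, Eaux, tv_sub_algebraMap]
    exact hinv.mul htl

end Efun

section Residue

open MvPolynomial

variable {σ : Type} [DecidableEq σ]

def substVar (a : σ) (z : ℂ) : MvPolynomial σ ℂ →+* FF σ :=
  eval₂Hom (algebraMap ℂ (FF σ)) (Function.update tv a (cc z))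

lemma substVar_comp_algebraMap (a : σ) (z : ℂ) :
    (substVar a z).comp (algebraMap ℂ (MvPolynomial σ ℂ)) = algebraMap ℂ (FF σ) :=
  eval₂Hom_comp_C _ _

lemma substVar_C (a : σ) (z c : ℂ) : substVar a z (C c) = cc c := by
  rw [substVar, eval₂Hom_C, IsScalarTower.algebraMap_apply ℂ (MvPolynomial σ ℂ) (FF σ),
    algebraMap_eq]
  rfl

lemma substVar_X (a : σ) (z : ℂ) (i : σ) :
    substVar a z (X i) = Function.update tv a (cc z) i :=
  eval₂Hom_X' _ _ _

lemma substVar_X_injective (a : σ) (z : ℂ) : Function.Injective fun i => substVar a z (X i) := by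
  intro i j h
  simp only [substVar_X, Function.update_apply] at h
  split_ifs at h with hi hj hj
  · exact hi.trans hj.symm
  · exact absurd h.symm (tv_ne_cc j z)
  · exact absurd h (tv_ne_cc i z)
  · exact tv_injective h

lemma hasValue_residue {a : σ} {z : ℂ} {l : List σ} (hl : l.Nodup) (ha : a ∈ l) :
    HasValue (substVar a z) ((tv a - cc z) * Efun z l)
      (if l.head? = some a then Efun z l.tail else 0) := by
  obtain _ | ⟨b, tl⟩ := l
  · exact absurd ha List.not_mem_nil
  have hatl := (List.nodup_cons.mp hl).1
  by_cases hb : b = a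
  · subst hb
    rw [List.head?_cons, if_pos rfl, List.tail_cons, Efun, Eaux,
      mul_inv_cancel_left₀ (sub_ne_zero.mpr (tv_ne_cc b z))]
    have hX : ∀ i ∈ tl, substVar b z (X i) = tv i := fun i hi => by
      rw [substVar_X, Function.update_of_ne (ne_of_mem_of_not_mem hi hatl)]
    have hval := hasValue_Eaux (φ := substVar b z) (w := X b) hl.of_cons hX fun i hi => by
      rw [substVar_X, Function.update_self]
      exact tv_ne_cc i z
    rwa [substVar_X, Function.update_self] at hval
  · rw [List.head?_cons, if_neg (by simpa using hb)]
    have hres : HasValue (substVar a z) (tv a - cc z) 0 := by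
      have h := hasValue_algebraMap (K := FF σ) (φ := substVar a z) (X a - C z)
      rwa [map_sub, map_sub, substVar_C, substVar_X, Function.update_self, sub_self] at h
    obtain ⟨y, hy⟩ := exists_hasValue_Eaux (substVar_X_injective a z) (w := C z) hl
      fun i hi => by
        rw [List.head?_cons, Option.mem_some_iff] at hi
        subst hi
        rw [substVar_C, substVar_X, Function.update_of_ne hb]
        exact tv_ne_cc _ z
    have h := hres.mul hy
    rwa [zero_mul] at h

end Residue

lemma sum_permutations_ite_head {α M : Type*} [DecidableEq α] [AddCommMonoid M] {L : List α}
    {a : α} (ha : a ∈ L) (f : List α → M) :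
    ∑ l ∈ L.permutations.toFinset, (if l.head? = some a then f l else 0) =
      ∑ l ∈ (L.erase a).permutations.toFinset, f (a :: l) := by
  rw [← Finset.sum_filter]
  have hmem : ∀ l, l ∈ L.permutations.toFinset.filter (·.head? = some a) ↔
      ∃ t ∈ (L.erase a).permutations.toFinset, a :: t = l := by
    intro l
    simp only [Finset.mem_filter, List.mem_toFinset, List.mem_permutations]
    constructor
    · rintro ⟨hl, hla⟩
      rw [← List.cons_head?_tail hla] at hl ⊢
      exact ⟨_, (List.cons_perm_iff_perm_erase.mp hl).2, rfl⟩
    · rintro ⟨t, ht, rfl⟩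
      exact ⟨List.cons_perm_iff_perm_erase.mpr ⟨ha, ht⟩, rfl⟩
  refine Finset.sum_nbij' List.tail (a :: ·) (fun l hl => ?_)
    (fun t ht => (hmem _).mpr ⟨t, ht, rfl⟩) (fun l hl => ?_) (fun _ _ => rfl) (fun l hl => ?_)
  all_goals obtain ⟨t, ht, rfl⟩ := (hmem l).mp hl
  exacts [ht, rfl, rfl]

theorem linearIndepOn_Efun_permutations {σ : Type} [DecidableEq σ] (z : ℂ) {L : List σ}
    (hL : L.Nodup) : LinearIndepOn ℂ (Efun z) (L.permutations.toFinset : Set (List σ)) := by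
  rw [linearIndepOn_finset_iff]
  intro c hc l hl
  have hlL : l.Perm L := List.mem_permutations.mp (List.mem_toFinset.mp hl)
  obtain _ | ⟨a, t⟩ := l
  · obtain rfl : L = [] := List.nil_perm.mp hlL
    simpa [Efun, Eaux] using hc
  have ha : a ∈ L := hlL.subset List.mem_cons_self
  have hval : HasValue (substVar a z)
      ((tv a - cc z) * ∑ l ∈ L.permutations.toFinset, c l • Efun z l)
      (∑ l ∈ L.permutations.toFinset, if l.head? = some a then c l • Efun z l.tail else 0) := by
    rw [Finset.mul_sum]
    refine HasValue.sum fun l hl => ?_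
    have hl' : l.Perm L := List.mem_permutations.mp (List.mem_toFinset.mp hl)
    rw [mul_smul_comm, ← smul_zero (c l), ← smul_ite]
    exact (hasValue_residue (hl'.nodup_iff.mpr hL) (hl'.symm.subset ha)).smul
      (substVar_comp_algebraMap a z) (c l)
  rw [hc, mul_zero, sum_permutations_ite_head ha] at hval
  have hsum : ∑ l ∈ (L.erase a).permutations.toFinset, c (a :: l) • Efun z l = 0 := by
    simpa using (hasValue_zero.unique hval).symm
  refine linearIndepOn_finset_iff.mp (linearIndepOn_Efun_permutations z (hL.erase a))
    (fun l => c (a :: l)) hsum t ?_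
  exact List.mem_toFinset.mpr
    (List.mem_permutations.mpr (List.cons_perm_iff_perm_erase.mp hlL).2)
termination_by L.length
decreasing_by
  rw [List.length_erase_of_mem ha]
  exact Nat.pred_lt (List.length_pos_of_mem ha).ne'

theorem statement8_general {C : Type} [DecidableEq C]
    (n : ℕ) (z : Fin n → ℂ)
    (vL : List C) (hnd : vL.Nodup) (s : Fin n) :
    LinearIndependent ℂ
      (fun vI : {l : List C // l ∈ vL.permutations.toFinset} => Efun (z s) vI.val) :=
  linearIndepOn_Efun_permutations (z s) hnd

theorem statement8 {C : Type} [Fintype C] [DecidableEq C]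
    (n : ℕ) (hn : 1 ≤ n) (z : Fin n → ℂ) (hz : Function.Injective z)
    (vL : List C) (hnd : vL.Nodup) (s : Fin n) :
    LinearIndependent ℂ
      (fun vI : {l : List C // l ∈ vL.permutations.toFinset} => Efun (z s) vI.val) :=
  statement8_general n z vL hnd s

end
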